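/- arXiv:1110.5439 — 2 statements merged into one kernel-verified Lean document; each statement's English description precedes it below -/
import Mathlib

section
/- For every unweighted congestion game with affine latency functions, the solution S achieved after any one-round walk starting from the empty strategy profile satisfies SUM(S) ≤ (2+√5)·SUM(O) for every strategy profile O. In particular, Apx¹_∅ of any such game is at most 2+√5. -/
open Finset

namespace CG

variable {n : ℕ} {E : Type*} [Fintype E] [DecidableEq E]

/-- The congestion (total weight) of resource `e` in profile `S`. -/
noncomputable def load (w : Fin n → ℝ) (S : Fin n → Finset E) (e : E) : ℝ :=
  ∑ i ∈ univ.filter fun i => e ∈ S i, w i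

/-- The cost of player `i` in profile `S`. -/
noncomputable def cost (w : Fin n → ℝ) (ℓ : E → ℝ → ℝ) (S : Fin n → Finset E) (i : Fin n) : ℝ :=
  ∑ e ∈ S i, ℓ e (load w S e)

/-- The social cost `SUM(S)`, the sum of the players' costs. -/
noncomputable def social (w : Fin n → ℝ) (ℓ : E → ℝ → ℝ) (S : Fin n → Finset E) : ℝ :=
  ∑ i, cost w ℓ S i

/-- The congestion of resource `e` due to the players preceding `i` (used for one-round walks). -/
noncomputable def preLoad (w : Fin n → ℝ) (S : Fin n → Finset E) (i : Fin n) (e : E) : ℝ :=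
  ∑ j ∈ univ.filter fun j => j < i ∧ e ∈ S j, w j

end CG

open CG

section Aux
set_option linter.unusedSectionVars false
variable {n : ℕ} {E : Type*} [Fintype E] [DecidableEq E]

lemma keyA (s : ℝ) (hs : s^2 = 5) (hs2 : 2 ≤ s) (hs3 : s ≤ 3) (l o : ℕ) :
    (l:ℝ)^2 + (1+s) * ((o:ℝ)*((l:ℝ)+1) - ((l:ℝ)^2 + (l:ℝ))/2) ≤ (2+s) * (o:ℝ)^2 := by
  have hl0 : (0:ℝ) ≤ l := Nat.cast_nonneg l
  rcases lt_or_ge o 2 with ho | ho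
  · interval_cases o
    · simp
      nlinarith [sq_nonneg (l:ℝ)]
    · rcases lt_or_ge l 2 with hl | hl
      · interval_cases l
        · push_cast; nlinarith
        · push_cast; nlinarith
      · have hl2 : (2:ℝ) ≤ l := by exact_mod_cast hl
        nlinarith [mul_nonneg (by linarith : (0:ℝ) ≤ (l:ℝ) - 1)
          (by nlinarith : (0:ℝ) ≤ 2*(l:ℝ) - 1 - s)]
  · have ho2 : (2:ℝ) ≤ o := by exact_mod_cast ho
    nlinarith [sq_nonneg (2*(s-1)*(l:ℝ) - (1+s)*(2*(o:ℝ)-1)),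
      mul_nonneg (by linarith : (0:ℝ) ≤ s - 1) (by linarith : (0:ℝ) ≤ (o:ℝ) - 2),
      hl0, ho2]

lemma sum_filter_lt_card (T : Finset (Fin n)) :
    2 * (∑ i ∈ T, (T.filter fun j => j < i).card) + T.card = T.card ^ 2 := by
  have hswap : (∑ i ∈ T, (T.filter fun j => j < i).card)
      = ∑ i ∈ T, (T.filter fun j => i < j).card := by
    simp_rw [Finset.card_filter]
    exact Finset.sum_comm
  have hsplit : ∀ i ∈ T,
      (T.filter fun j => j < i).card + (T.filter fun j => i < j).card + 1 = T.card := by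
    intro i hi
    have hdisj : Disjoint (T.filter fun j => j < i) (T.filter fun j => i < j) := by
      apply Finset.disjoint_left.2
      intro a ha hb
      simp only [Finset.mem_filter] at ha hb
      exact absurd (ha.2.trans hb.2) (lt_irrefl a)
    have hunion : (T.filter fun j => j < i) ∪ (T.filter fun j => i < j) = T.erase i := by
      ext j
      simp only [Finset.mem_union, Finset.mem_filter, Finset.mem_erase]
      constructor
      · rintro (⟨h1, h2⟩ | ⟨h1, h2⟩)
        · exact ⟨ne_of_lt h2, h1⟩
        · exact ⟨ne_of_gt h2, h1⟩
      · rintro ⟨hne, hj⟩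
        rcases lt_or_gt_of_ne hne with h | h
        · exact Or.inl ⟨hj, h⟩
        · exact Or.inr ⟨hj, h⟩
    have hcu := Finset.card_union_of_disjoint hdisj
    rw [hunion] at hcu
    have hce := Finset.card_erase_add_one hi
    omega
  calc 2 * (∑ i ∈ T, (T.filter fun j => j < i).card) + T.card
      = ∑ i ∈ T, ((T.filter fun j => j < i).card + (T.filter fun j => i < j).card + 1) := by
        rw [two_mul]
        nth_rewrite 2 [hswap]
        rw [Finset.sum_add_distrib, Finset.sum_add_distrib, Finset.sum_const, smul_eq_mul,
          mul_one]
    _ = ∑ _i ∈ T, T.card := Finset.sum_congr rfl hsplit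
    _ = T.card ^ 2 := by rw [Finset.sum_const, smul_eq_mul, sq]

lemma swap_sum (P : Fin n → Finset E) (g : Fin n → E → ℝ) :
    ∑ i, ∑ e ∈ P i, g i e = ∑ e, ∑ i ∈ univ.filter fun i => e ∈ P i, g i e := by
  have h1 : ∀ i : Fin n, ∑ e ∈ P i, g i e = ∑ e : E, if e ∈ P i then g i e else 0 := by
    intro i
    rw [Finset.sum_ite_mem, Finset.univ_inter]
  simp_rw [h1, Finset.sum_filter]
  exact Finset.sum_comm

lemma load_eq (w : Fin n → ℝ) (hw : ∀ i, w i = 1) (S : Fin n → Finset E) (e : E) :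
    load w S e = ((univ.filter fun i => e ∈ S i).card : ℝ) := by
  unfold load
  rw [Finset.sum_congr rfl fun i _ => hw i, Finset.sum_const, nsmul_eq_mul, mul_one]

lemma preLoad_eq (w : Fin n → ℝ) (hw : ∀ i, w i = 1) (S : Fin n → Finset E) (i : Fin n) (e : E) :
    preLoad w S i e = (((univ.filter fun j => e ∈ S j).filter fun j => j < i).card : ℝ) := by
  unfold preLoad
  rw [Finset.filter_filter]
  have hset : (univ.filter fun j => j < i ∧ e ∈ S j)
      = univ.filter fun j => e ∈ S j ∧ j < i := by
    apply Finset.filter_congr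
    intro j _
    simp [and_comm]
  rw [hset, Finset.sum_congr rfl fun j _ => hw j, Finset.sum_const, nsmul_eq_mul, mul_one]

lemma social_eq (w : Fin n → ℝ) (ℓ : E → ℝ → ℝ) (X : Fin n → Finset E) :
    social w ℓ X = ∑ e, ((univ.filter fun i => e ∈ X i).card : ℝ) * ℓ e (load w X e) := by
  unfold social cost
  rw [swap_sum X (fun _ e => ℓ e (load w X e))]
  exact Finset.sum_congr rfl fun e _ => by
    rw [Finset.sum_const, nsmul_eq_mul]

end Aux

theorem oneround_unweighted_affine
    (n : ℕ) (E : Type*) [Fintype E] [DecidableEq E]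
    (w : Fin n → ℝ) (hw : ∀ i, w i = 1)
    (Strat : Fin n → Set (Finset E)) (hStrat : ∀ i, (Strat i).Nonempty)
    (α β : E → ℝ) (hα : ∀ e, 0 ≤ α e) (hβ : ∀ e, 0 ≤ β e)
    (ℓ : E → ℝ → ℝ) (hℓ : ∀ e x, ℓ e x = α e * x + β e)
    (S : Fin n → Finset E)
    (hWalk : ∀ i, S i ∈ Strat i ∧ ∀ t ∈ Strat i,
      ∑ e ∈ S i, ℓ e (preLoad w S i e + w i) ≤ ∑ e ∈ t, ℓ e (preLoad w S i e + w i))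
    (O : Fin n → Finset E) (hO : ∀ i, O i ∈ Strat i) :
    social w ℓ S ≤ (2 + Real.sqrt 5) * social w ℓ O := by
  set s : ℝ := Real.sqrt 5 with hs_def
  have hs0 : 0 ≤ s := Real.sqrt_nonneg 5
  have hs : s ^ 2 = 5 := Real.sq_sqrt (by norm_num)
  have hs2 : 2 ≤ s := by nlinarith
  have hs3 : s ≤ 3 := by nlinarith
  -- notation
  set T : E → Finset (Fin n) := fun e => univ.filter fun i => e ∈ S i with hT
  set U : E → Finset (Fin n) := fun e => univ.filter fun i => e ∈ O i with hU
  set lR : E → ℝ := fun e => ((T e).card : ℝ) with hlR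
  set oR : E → ℝ := fun e => ((U e).card : ℝ) with hoR
  set Ins : ℝ := ∑ i, ∑ e ∈ S i, ℓ e (preLoad w S i e + w i) with hIns_def
  -- social cost of S
  have hSocS : social w ℓ S = ∑ e, (α e * (lR e)^2 + β e * lR e) := by
    rw [social_eq w ℓ S]
    refine Finset.sum_congr rfl fun e _ => ?_
    rw [hℓ, load_eq w hw S e]
    ring
  -- social cost of O
  have hSocO : social w ℓ O = ∑ e, (α e * (oR e)^2 + β e * oR e) := by
    rw [social_eq w ℓ O]
    refine Finset.sum_congr rfl fun e _ => ?_
    rw [hℓ, load_eq w hw O e]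
    ring
  -- insertion-cost identity
  have hInsId : 2 * Ins = ∑ e, (α e * ((lR e)^2 + lR e) + 2 * β e * lR e) := by
    have h1 : Ins = ∑ e, ∑ i ∈ T e,
        (α e * ((((T e).filter fun j => j < i).card : ℝ) + 1) + β e) := by
      rw [hIns_def]
      rw [swap_sum S (fun i e => ℓ e (preLoad w S i e + w i))]
      refine Finset.sum_congr rfl fun e _ => Finset.sum_congr rfl fun i _ => ?_
      rw [hℓ, hw, preLoad_eq w hw S i e]
    rw [h1, Finset.mul_sum]
    refine Finset.sum_congr rfl fun e _ => ?_
    simp only [hlR]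
    have hA := sum_filter_lt_card (T e)
    have hAR : 2 * (∑ i ∈ T e, ((((T e).filter fun j => j < i).card : ℝ))) + ((T e).card : ℝ)
        = ((T e).card : ℝ) ^ 2 := by
      exact_mod_cast congrArg (Nat.cast : ℕ → ℝ) hA
    have h2 : ∑ i ∈ T e, (α e * ((((T e).filter fun j => j < i).card : ℝ) + 1) + β e)
        = α e * ((∑ i ∈ T e, ((((T e).filter fun j => j < i).card : ℝ))) + ((T e).card : ℝ))
          + β e * ((T e).card : ℝ) := by
      rw [Finset.sum_add_distrib, ← Finset.mul_sum, Finset.sum_add_distrib,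
        Finset.sum_const, Finset.sum_const]
      simp only [nsmul_eq_mul, mul_one]
      ring
    rw [h2]
    linear_combination (α e) * hAR
  -- greedy bound
  have hKle : ∀ (i : Fin n) (e : E), preLoad w S i e ≤ lR e := by
    intro i e
    rw [preLoad_eq w hw S i e]
    simp only [hlR, hT]
    exact_mod_cast Finset.card_le_card (Finset.filter_subset _ _)
  have hpre0 : ∀ (i : Fin n) (e : E), 0 ≤ preLoad w S i e := by
    intro i e
    rw [preLoad_eq w hw S i e]
    positivity
  have hGreedy : Ins ≤ ∑ e, oR e * (α e * (lR e + 1) + β e) := by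
    have hg1 : Ins ≤ ∑ i, ∑ e ∈ O i, ℓ e (preLoad w S i e + w i) :=
      Finset.sum_le_sum fun i _ => (hWalk i).2 (O i) (hO i)
    have hg3 : (∑ i, ∑ e ∈ O i, ℓ e (preLoad w S i e + w i))
        ≤ ∑ i, ∑ e ∈ O i, (α e * (lR e + 1) + β e) := by
      refine Finset.sum_le_sum fun i _ => Finset.sum_le_sum fun e _ => ?_
      rw [hℓ, hw]
      have h1 := hKle i e
      have h2 := hα e
      nlinarith
    have hg4 : (∑ i, ∑ e ∈ O i, (α e * (lR e + 1) + β e))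
        = ∑ e, oR e * (α e * (lR e + 1) + β e) := by
      rw [swap_sum O (fun _ e => α e * (lR e + 1) + β e)]
      exact Finset.sum_congr rfl fun e _ => by
        rw [Finset.sum_const, nsmul_eq_mul]
    linarith [hg1.trans hg3, le_of_eq hg4]
  -- pointwise key inequality
  have hkey : ∀ e : E,
      α e * (lR e)^2 + β e * lR e
        + (1+s) * (oR e * (α e * (lR e + 1) + β e)
            - (α e * ((lR e)^2 + lR e) + 2 * β e * lR e) / 2)
      ≤ (2+s) * (α e * (oR e)^2 + β e * oR e) := by
    intro e
    have hA := keyA s hs hs2 hs3 (T e).card (U e).card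
    have hl0 : (0:ℝ) ≤ lR e := by rw [hlR]; positivity
    have ho0 : (0:ℝ) ≤ oR e := by rw [hoR]; positivity
    have hB : lR e + (1+s) * (oR e - lR e) ≤ (2+s) * oR e := by nlinarith
    have hA' : (lR e)^2 + (1+s) * (oR e * (lR e + 1) - ((lR e)^2 + lR e)/2)
        ≤ (2+s) * (oR e)^2 := hA
    nlinarith [mul_le_mul_of_nonneg_left hA' (hα e), mul_le_mul_of_nonneg_left hB (hβ e)]
  -- assemble
  have hsum : ∑ e, (α e * (lR e)^2 + β e * lR e
        + (1+s) * (oR e * (α e * (lR e + 1) + β e)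
            - (α e * ((lR e)^2 + lR e) + 2 * β e * lR e) / 2))
      ≤ ∑ e, (2+s) * (α e * (oR e)^2 + β e * oR e) :=
    Finset.sum_le_sum fun e _ => hkey e
  have hsplit : ∑ e, (α e * (lR e)^2 + β e * lR e
        + (1+s) * (oR e * (α e * (lR e + 1) + β e)
            - (α e * ((lR e)^2 + lR e) + 2 * β e * lR e) / 2))
      = (∑ e, (α e * (lR e)^2 + β e * lR e))
        + (1+s) * ((∑ e, oR e * (α e * (lR e + 1) + β e))
            - (∑ e, (α e * ((lR e)^2 + lR e) + 2 * β e * lR e)) / 2) := by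
    rw [Finset.sum_add_distrib, ← Finset.mul_sum, Finset.sum_sub_distrib, Finset.sum_div]
  have hmono : 0 ≤ (1+s) * ((∑ e, oR e * (α e * (lR e + 1) + β e)) - Ins) := by
    have := sub_nonneg.2 hGreedy
    positivity
  have hfin : (∑ e, (2+s) * (α e * (oR e)^2 + β e * oR e))
      = (2+s) * social w ℓ O := by
    rw [hSocO, Finset.mul_sum]
  rw [hsplit] at hsum
  have hIns2 : (∑ e, (α e * ((lR e)^2 + lR e) + 2 * β e * lR e)) / 2 = Ins := by
    linarith [hInsId]
  rw [hIns2] at hsum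
  linarith [hsum, hmono, hSocS.le, hfin.le]
end

section
/- For every unweighted congestion game with cubic latency functions ℓ_e(x) = α_e x³ (α_e ≥ 0), the solution S achieved after any one-round walk starting from the empty strategy profile satisfies SUM(S) ≤ (17929/34)·SUM(O) for every strategy profile O. In particular, Apx¹_∅ of any such game is at most 17929/34 ≈ 527.323. -/
open Finset

open CG

/-!
Along the walk, player `i` pays `∑ e ∈ s_i, α_e (K_e(i) + 1)³`. Grouping these payments by
resource, the players using `e` pay `1³ + 2³ + ⋯ + L_e³ = L_e²(L_e + 1)²/4`, where `L_e` is the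
load of `e` in `S`. Since each player chose greedily and the latencies are monotone, the same sum
is at most what the players would have paid by deviating to `O`, which is at most
`∑ e, M_e α_e (L_e + 1)³` with `M_e` the load of `e` in `O`. The theorem then follows by
weighting the two sides of this greedy inequality by `c = 369/34` and adding the per-resource
inequality `L⁴ + c M (L + 1)³ ≤ (17929/34) M⁴ + c L²(L + 1)²/4`, valid for all natural `L`, `M`.
-/

theorem Finset.sum_card_filter_lt {α M : Type*} [LinearOrder α] [AddCommMonoid M]
    (T : Finset α) (g : ℕ → M) :
    ∑ i ∈ T, g #(T.filter (· < i)) = ∑ k ∈ range #T, g k := by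
  classical
  induction T using Finset.induction_on_max with
  | empty => simp
  | insert a T ha ih =>
    have haT : a ∉ T := fun h => lt_irrefl a (ha a h)
    have h_top : (insert a T).filter (· < a) = T := by
      rw [filter_insert, if_neg (lt_irrefl a), filter_true_of_mem ha]
    have h_below : ∀ i ∈ T, (insert a T).filter (· < i) = T.filter (· < i) := by
      intro i hi
      rw [filter_insert, if_neg (not_lt.2 (ha i hi).le)]
    rw [sum_insert haT, h_top, sum_congr rfl fun i hi => by rw [h_below i hi], ih,
      card_insert_of_notMem haT, sum_range_succ, add_comm]

theorem sum_range_add_one_pow_three (m : ℕ) :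
    ∑ k ∈ range m, ((k : ℝ) + 1) ^ 3 = (m : ℝ) ^ 2 * ((m : ℝ) + 1) ^ 2 / 4 := by
  induction m with
  | zero => simp
  | succ m ih =>
    rw [sum_range_succ, ih]
    push_cast
    ring

theorem four_mul_pow_three_mul_le {u v : ℝ} (hu : 0 ≤ u) (hv : 0 ≤ v) :
    4 * u ^ 3 * v ≤ 3 * u ^ 4 + v ^ 4 := by
  nlinarith [mul_nonneg (sq_nonneg (u - v)) (by positivity : 0 ≤ 3 * u ^ 2 + 2 * (u * v) + v ^ 2)]


theorem cubic_resource_bound_of_six_le {L M : ℝ} (hL : 6 ≤ L) (hM : 0 ≤ M) :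
    L ^ 4 + 369 / 34 * M * (L + 1) ^ 3
      ≤ 17929 / 34 * M ^ 4 + 369 / 34 * (L ^ 2 * (L + 1) ^ 2 / 4) := by
  -- `173 / 1000 * (L + 1)` approximates the maximiser in `M` of the difference of the two sides.
  have amgm := four_mul_pow_three_mul_le (u := 173 / 1000 * (L + 1)) (by linarith) hM
  have h6 := sub_nonneg.2 hL
  nlinarith [mul_nonneg (mul_nonneg h6 h6) (mul_nonneg h6 h6), mul_nonneg (mul_nonneg h6 h6) h6,
    mul_nonneg h6 h6]

theorem cubic_resource_bound_of_le_five {L : ℕ} (hL : L ≤ 5) (M : ℕ) :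
    (L : ℝ) ^ 4 + 369 / 34 * M * ((L : ℝ) + 1) ^ 3
      ≤ 17929 / 34 * (M : ℝ) ^ 4 + 369 / 34 * ((L : ℝ) ^ 2 * ((L : ℝ) + 1) ^ 2 / 4) := by
  have hL0 : (0 : ℝ) ≤ L := L.cast_nonneg
  have h_quartic : (L : ℝ) ^ 4 ≤ 369 / 34 * ((L : ℝ) ^ 2 * ((L : ℝ) + 1) ^ 2 / 4) := by
    nlinarith [pow_le_pow_left₀ hL0 (by linarith : (L : ℝ) ≤ L + 1) 2, sq_nonneg (L : ℝ)]
  rcases M with _ | _ | M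
  · simpa using h_quartic
  · interval_cases L <;> norm_num
  · have hm : (2 : ℝ) ≤ ((M + 2 : ℕ) : ℝ) := by push_cast; linarith [M.cast_nonneg (α := ℝ)]
    have h_cube : ((L : ℝ) + 1) ^ 3 ≤ 216 := by
      have : (L : ℝ) + 1 ≤ 6 := by exact_mod_cast Nat.succ_le_succ hL
      nlinarith [pow_le_pow_left₀ (by linarith) this 3]
    have h_quartic_M : 8 * ((M + 2 : ℕ) : ℝ) ≤ ((M + 2 : ℕ) : ℝ) ^ 4 := by
      nlinarith [pow_le_pow_left₀ (by norm_num) hm 3]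
    nlinarith [mul_le_mul_of_nonneg_left h_cube (by linarith : (0 : ℝ) ≤ ((M + 2 : ℕ) : ℝ))]

-- Equality holds at `L = 5`, `M = 1`.
theorem cubic_resource_bound (L M : ℕ) :
    (L : ℝ) ^ 4 + 369 / 34 * M * ((L : ℝ) + 1) ^ 3
      ≤ 17929 / 34 * (M : ℝ) ^ 4 + 369 / 34 * ((L : ℝ) ^ 2 * ((L : ℝ) + 1) ^ 2 / 4) := by
  rcases le_or_gt L 5 with hL | hL
  · exact cubic_resource_bound_of_le_five hL M
  · exact cubic_resource_bound_of_six_le (by exact_mod_cast hL) M.cast_nonneg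

namespace CG

variable {n : ℕ} {E : Type*} [DecidableEq E]

def users (S : Fin n → Finset E) (e : E) : Finset (Fin n) :=
  univ.filter fun i => e ∈ S i

theorem load_one (S : Fin n → Finset E) (e : E) : load 1 S e = #(users S e) := by
  simp [load, users]

theorem preLoad_one (S : Fin n → Finset E) (i : Fin n) (e : E) :
    preLoad 1 S i e = #((users S e).filter (· < i)) := by
  simp only [preLoad, users, filter_filter, Pi.one_apply, sum_const, nsmul_eq_mul, mul_one]
  congr 3
  ext j
  exact and_comm

theorem preLoad_one_le_load_one (S : Fin n → Finset E) (i : Fin n) (e : E) :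
    preLoad 1 S i e ≤ load 1 S e := by
  rw [preLoad_one, load_one]
  exact_mod_cast card_filter_le _ _

variable [Fintype E]

theorem sum_sum_eq_sum_sum_users (S : Fin n → Finset E) (F : Fin n → E → ℝ) :
    ∑ i, ∑ e ∈ S i, F i e = ∑ e, ∑ i ∈ users S e, F i e :=
  sum_comm' fun i e => by simp [users]

theorem social_one (ℓ : E → ℝ → ℝ) (S : Fin n → Finset E) :
    social 1 ℓ S = ∑ e, #(users S e) * ℓ e #(users S e) := by
  simp only [social, cost, load_one, sum_sum_eq_sum_sum_users, sum_const, nsmul_eq_mul]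

theorem sum_sum_latency_preLoad_one (ℓ : E → ℝ → ℝ) (S : Fin n → Finset E) :
    ∑ i, ∑ e ∈ S i, ℓ e (preLoad 1 S i e + 1) = ∑ e, ∑ k ∈ range #(users S e), ℓ e (k + 1) := by
  simp only [preLoad_one, sum_sum_eq_sum_sum_users]
  exact sum_congr rfl fun e _ => (users S e).sum_card_filter_lt fun k => ℓ e (k + 1)

theorem sum_range_latency_le_of_oneRound {ℓ : E → ℝ → ℝ} (hℓ : ∀ e, Monotone (ℓ e))
    {S O : Fin n → Finset E}
    (hbest : ∀ i, ∑ e ∈ S i, ℓ e (preLoad 1 S i e + 1) ≤ ∑ e ∈ O i, ℓ e (preLoad 1 S i e + 1)) :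
    ∑ e, ∑ k ∈ range #(users S e), ℓ e (k + 1) ≤ ∑ e, #(users O e) * ℓ e (#(users S e) + 1) :=
  calc ∑ e, ∑ k ∈ range #(users S e), ℓ e (k + 1)
      = ∑ i, ∑ e ∈ S i, ℓ e (preLoad 1 S i e + 1) := (sum_sum_latency_preLoad_one ℓ S).symm
    _ ≤ ∑ i, ∑ e ∈ O i, ℓ e (preLoad 1 S i e + 1) := sum_le_sum fun i _ => hbest i
    _ ≤ ∑ i, ∑ e ∈ O i, ℓ e (#(users S e) + 1) := by
      gcongr with i _ e _
      apply hℓ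
      simpa [load_one] using preLoad_one_le_load_one S i e
    _ = ∑ e, #(users O e) * ℓ e (#(users S e) + 1) := by
      simp only [sum_sum_eq_sum_sum_users, sum_const, nsmul_eq_mul]

end CG

theorem oneround_unweighted_cubic_general
    (n : ℕ) (E : Type*) [Fintype E] [DecidableEq E]
    (w : Fin n → ℝ) (hw : ∀ i, w i = 1)
    (Strat : Fin n → Set (Finset E))
    (α : E → ℝ) (hα : ∀ e, 0 ≤ α e)
    (ℓ : E → ℝ → ℝ) (hℓ : ∀ e x, ℓ e x = α e * x ^ 3)
    (S : Fin n → Finset E)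
    (hWalk : ∀ i, S i ∈ Strat i ∧ ∀ t ∈ Strat i,
      ∑ e ∈ S i, ℓ e (preLoad w S i e + w i) ≤ ∑ e ∈ t, ℓ e (preLoad w S i e + w i))
    (O : Fin n → Finset E) (hO : ∀ i, O i ∈ Strat i) :
    social w ℓ S ≤ (17929 / 34) * social w ℓ O := by
  obtain rfl : w = 1 := funext hw
  obtain rfl : ℓ = fun e x => α e * x ^ 3 := funext₂ hℓ
  have h_mono e : Monotone fun x : ℝ => α e * x ^ 3 :=
    (Odd.strictMono_pow (by decide)).monotone.const_mul (hα e)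
  have h_greedy := sum_range_latency_le_of_oneRound h_mono
    fun i => by simpa using (hWalk i).2 (O i) (hO i)
  simp only [← mul_sum, sum_range_add_one_pow_three] at h_greedy
  have h_resource e :
      #(users S e) * (α e * #(users S e) ^ 3)
          + 369 / 34 * (#(users O e) * (α e * (#(users S e) + 1) ^ 3))
        ≤ 17929 / 34 * (#(users O e) * (α e * #(users O e) ^ 3))
          + 369 / 34 * (α e * (#(users S e) ^ 2 * (#(users S e) + 1) ^ 2 / 4)) := by
    linear_combination mul_le_mul_of_nonneg_left
      (cubic_resource_bound #(users S e) #(users O e)) (hα e)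
  have h_sum := sum_le_sum fun e (_ : e ∈ univ) => h_resource e
  simp only [sum_add_distrib, ← mul_sum] at h_sum
  rw [social_one, social_one]
  linarith

theorem oneround_unweighted_cubic
    (n : ℕ) (E : Type*) [Fintype E] [DecidableEq E]
    (w : Fin n → ℝ) (hw : ∀ i, w i = 1)
    (Strat : Fin n → Set (Finset E)) (hStrat : ∀ i, (Strat i).Nonempty)
    (α : E → ℝ) (hα : ∀ e, 0 ≤ α e)
    (ℓ : E → ℝ → ℝ) (hℓ : ∀ e x, ℓ e x = α e * x ^ 3)
    (S : Fin n → Finset E)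
    (hWalk : ∀ i, S i ∈ Strat i ∧ ∀ t ∈ Strat i,
      ∑ e ∈ S i, ℓ e (preLoad w S i e + w i) ≤ ∑ e ∈ t, ℓ e (preLoad w S i e + w i))
    (O : Fin n → Finset E) (hO : ∀ i, O i ∈ Strat i) :
    social w ℓ S ≤ (17929 / 34) * social w ℓ O :=
  oneround_unweighted_cubic_general n E w hw Strat α hα ℓ hℓ S hWalk O hO
end
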